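/- Main result, non-Archimedean case (Theorem 5.1): Let Y be a real vector space, K ⊆ Y a convex cone, H ⊆ Y a convex cone with K ⊆ H, Λ : [0,∞) → K almost normal modulo (K,H), γ the gauge function attached to (H,Λ) (γ(y) := sup {s ∈ [0,∞) : Λ(s) ≤_H y} in the extended reals, sup ∅ = −∞), (X,d) a metric space, ⪰ the quasi-order on X × Y given by (x₁,y₁) ⪰ (x₂,y₂) iff Λ(d(x₁,x₂)) ≤_K y₁ − y₂, and e the semimetric e((x₁,y₁),(x₂,y₂)) = d(x₁,x₂). Let A ⊆ X × Y be nonempty and set Φ(x,y) := γ(y), Dom(Φ) := {(x,y) ∈ A : γ(y) < ∞}. Assume: (i) P_Y(A) ⊆ H; (ii) Dom(Φ) is nonempty; (iii) every ⪰-ascending e-Cauchy sequence contained in Dom(Φ) is bounded above in A modulo ⪰. Then for each (x₀,y₀) ∈ Dom(Φ) there exists (x̄,ȳ) ∈ Dom(Φ) such that (x₀,y₀) ⪰ (x̄,ȳ), and for every (x′,y′) ∈ A with (x̄,ȳ) ⪰ (x′,y′) one has x̄ = x′ and γ(ȳ) = γ(y′). -/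

import Mathlib

/-- The gauge function attached to `(H, Λ)`. -/
noncomputable def conicalGauge {Y : Type*} [AddCommGroup Y] [Module ℝ Y]
    (H : Set Y) (Λ : ℝ → Y) (y : Y) : EReal :=
  sSup ((fun s : ℝ => (s : EReal)) '' {s : ℝ | 0 ≤ s ∧ y - Λ s ∈ H})

/-- The product quasi-order on `X × Y`:
`(x₁,y₁) ⪰ (x₂,y₂)` iff `Λ(d(x₁,x₂)) ≤_K y₁ − y₂`. -/
def prodSucc {Y : Type*} [AddCommGroup Y] [Module ℝ Y]
    (K : Set Y) (Λ : ℝ → Y) {X : Type*} [MetricSpace X]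
    (p q : X × Y) : Prop :=
  p.2 - q.2 - Λ (dist p.1 q.1) ∈ K

/-! If `(x₁, y₁) ⪰ (x₂, y₂)` then `γ(y₂) + d(x₁, x₂) ≤ γ(y₁)`: every `s` admissible for `y₂`
makes `s + d(x₁, x₂)` admissible for `y₁`, by subadditivity of `Λ` modulo `K ⊆ H`. On `Dom(Φ)`
the gauge is a nonnegative real number, so a Brézis–Browder argument applies: choose each `aₙ₊₁`
to minimise `γ` up to `2⁻ⁿ` among the successors of `aₙ`. The chain is then `e`-Cauchy, and on
the successors of any upper bound of it both `γ` and the `X`-coordinate are constant. -/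

section OrderingPrinciple

variable {α : Type*} (R : α → α → Prop) [Std.Refl R] {D : Set α} {φ : α → ℝ}

theorem exists_rel_lt_add_of_bddBelow (hφ : BddBelow (φ '' D)) {p : α} (hp : p ∈ D) {ε : ℝ}
    (hε : 0 < ε) : ∃ q ∈ D, R p q ∧ ∀ r ∈ D, R p r → φ q < φ r + ε := by
  set T := φ '' {r | r ∈ D ∧ R p r}
  have hT : T.Nonempty := ⟨φ p, p, ⟨hp, refl p⟩, rfl⟩
  obtain ⟨_, ⟨q, ⟨hqD, hpq⟩, rfl⟩, hq⟩ := exists_lt_of_csInf_lt hT (lt_add_of_pos_right _ hε)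
  refine ⟨q, hqD, hpq, fun r hrD hpr => hq.trans_le ?_⟩
  have hbdd : BddBelow T := hφ.mono (Set.image_mono fun r hr => hr.1)
  exact add_le_add_left (csInf_le hbdd ⟨r, ⟨hrD, hpr⟩, rfl⟩) ε

theorem exists_chain_forall_rel_lt_add (hφ : BddBelow (φ '' D)) {p : α} (hp : p ∈ D) :
    ∃ a : ℕ → α, a 0 = p ∧ (∀ n, a n ∈ D) ∧ (∀ n, R (a n) (a (n + 1))) ∧
      ∀ n, ∀ r ∈ D, R (a n) r → φ (a (n + 1)) < φ r + (1 / 2) ^ n := by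
  choose! next hnextD hnextR hnextlt using fun (n : ℕ) (q : α) (hq : q ∈ D) =>
    exists_rel_lt_add_of_bddBelow R hφ hq (pow_pos (one_half_pos (α := ℝ)) n)
  let a : ℕ → α := fun n => Nat.rec p (fun n q => next n q) n
  have haD : ∀ n, a n ∈ D := by
    intro n
    induction n with
    | zero => exact hp
    | succ n ih => exact hnextD n _ ih
  exact ⟨a, rfl, haD, fun n => hnextR n _ (haD n), fun n => hnextlt n _ (haD n)⟩

theorem exists_rel_forall_rel_eq_of_add_le [IsTrans α R] {e : α → α → ℝ} (he : ∀ p q, 0 ≤ e p q)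
    (hφ : BddBelow (φ '' D)) (hφe : ∀ p ∈ D, ∀ q ∈ D, R p q → φ q + e p q ≤ φ p)
    (hbound : ∀ a : ℕ → α, (∀ n, a n ∈ D) → (∀ n m, n ≤ m → R (a n) (a m)) →
      (∀ δ : ℝ, 0 < δ → ∃ N : ℕ, ∀ m k, N ≤ m → m ≤ k → e (a m) (a k) ≤ δ) →
      ∃ b ∈ D, ∀ n, R (a n) b)
    {p : α} (hp : p ∈ D) : ∃ q ∈ D, R p q ∧ ∀ r ∈ D, R q r → e q r = 0 ∧ φ q = φ r := by
  obtain ⟨a, rfl, haD, hsucc, hlt⟩ := exists_chain_forall_rel_lt_add R hφ hp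
  have hchain : ∀ n m, n ≤ m → R (a n) (a m) := fun n m hnm =>
    Nat.rel_of_forall_rel_succ_of_le R hsucc hnm
  have hcauchy : ∀ δ : ℝ, 0 < δ → ∃ N : ℕ, ∀ m k, N ≤ m → m ≤ k → e (a m) (a k) ≤ δ := by
    intro δ hδ
    obtain ⟨N, hN⟩ := exists_pow_lt_of_lt_one hδ one_half_lt_one
    refine ⟨N + 1, fun m k hm hmk => ?_⟩
    have h₁ := hφe _ (haD m) _ (haD k) (hchain m k hmk)
    have h₂ := hφe _ (haD (N + 1)) _ (haD m) (hchain _ _ hm)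
    have h₃ := hlt N _ (haD k) (hchain N k (by omega))
    linarith [he (a (N + 1)) (a m)]
  obtain ⟨b, hbD, hb⟩ := hbound a haD hchain hcauchy
  refine ⟨b, hbD, hb 0, fun r hrD hbr => ?_⟩
  have hφbr : φ b ≤ φ r := by
    refine le_of_forall_pos_lt_add fun ε hε => ?_
    obtain ⟨n, hn⟩ := exists_pow_lt_of_lt_one hε one_half_lt_one
    have h₁ := hφe _ (haD (n + 1)) _ hbD (hb (n + 1))
    have h₂ := hlt n r hrD (_root_.trans (hb n) hbr)
    linarith [he (a (n + 1)) b]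
  have h := hφe b hbD r hrD hbr
  constructor <;> linarith [he b r]

end OrderingPrinciple

section Cone

variable {Y : Type*} [AddCommGroup Y] [Module ℝ Y] {K H : Set Y} {Λ : ℝ → Y}

theorem add_mem_of_smul_add_smul_mem {C : Set Y}
    (hC : ∀ a b : ℝ, 0 ≤ a → 0 ≤ b → ∀ x ∈ C, ∀ y ∈ C, a • x + b • y ∈ C) {x y : Y}
    (hx : x ∈ C) (hy : y ∈ C) : x + y ∈ C := by
  simpa using hC 1 1 zero_le_one zero_le_one x hx y hy

theorem zero_le_conicalGauge (hΛ0 : Λ 0 = 0) {y : Y} (hy : y ∈ H) : 0 ≤ conicalGauge H Λ y :=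
  le_sSup ⟨0, ⟨le_rfl, by rwa [hΛ0, sub_zero]⟩, rfl⟩

theorem coe_toReal_conicalGauge (hΛ0 : Λ 0 = 0) {y : Y} (hy : y ∈ H)
    (hfin : conicalGauge H Λ y < ⊤) : ((conicalGauge H Λ y).toReal : EReal) = conicalGauge H Λ y :=
  EReal.coe_toReal hfin.ne ((EReal.bot_lt_zero.trans_le (zero_le_conicalGauge hΛ0 hy)).ne')

theorem conicalGauge_add_le (hHadd : ∀ x ∈ H, ∀ y ∈ H, x + y ∈ H)
    (hΛsub : ∀ t₁ t₂ : ℝ, 0 ≤ t₁ → 0 ≤ t₂ → (Λ t₁ + Λ t₂) - Λ (t₁ + t₂) ∈ H)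
    {y z : Y} {d : ℝ} (hd : 0 ≤ d) (hyz : y - z - Λ d ∈ H) :
    conicalGauge H Λ z + d ≤ conicalGauge H Λ y := by
  rw [← EReal.le_sub_iff_add_le (.inl (EReal.coe_ne_bot d)) (.inl (EReal.coe_ne_top d))]
  refine sSup_le ?_
  rintro _ ⟨s, ⟨hs, hzs⟩, rfl⟩
  rw [EReal.le_sub_iff_add_le (.inl (EReal.coe_ne_bot d)) (.inl (EReal.coe_ne_top d))]
  refine le_sSup ⟨s + d, ⟨add_nonneg hs hd, ?_⟩, rfl⟩
  convert hHadd _ (hHadd _ hyz _ hzs) _ (hΛsub s d hs hd) using 1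
  abel

variable {X : Type*} [MetricSpace X]

theorem prodSucc_refl (hK0 : 0 ∈ K) (hΛ0 : Λ 0 = 0) (p : X × Y) : prodSucc K Λ p p := by
  simpa [prodSucc, hΛ0] using hK0

theorem prodSucc_trans (hKadd : ∀ x ∈ K, ∀ y ∈ K, x + y ∈ K)
    (hΛmono : ∀ t τ : ℝ, 0 ≤ t → t ≤ τ → Λ τ - Λ t ∈ K)
    (hΛsub : ∀ t₁ t₂ : ℝ, 0 ≤ t₁ → 0 ≤ t₂ → (Λ t₁ + Λ t₂) - Λ (t₁ + t₂) ∈ K)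
    {p q r : X × Y} (hpq : prodSucc K Λ p q) (hqr : prodSucc K Λ q r) : prodSucc K Λ p r := by
  have hsub := hΛsub _ _ (dist_nonneg (x := p.1) (y := q.1)) (dist_nonneg (x := q.1) (y := r.1))
  have hmono := hΛmono _ _ dist_nonneg (dist_triangle p.1 q.1 r.1)
  unfold prodSucc at *
  convert hKadd _ (hKadd _ (hKadd _ hpq _ hqr) _ hsub) _ hmono using 1
  abel

theorem conicalGauge_add_dist_le_of_prodSucc (hHadd : ∀ x ∈ H, ∀ y ∈ H, x + y ∈ H) (hKH : K ⊆ H)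
    (hΛsub : ∀ t₁ t₂ : ℝ, 0 ≤ t₁ → 0 ≤ t₂ → (Λ t₁ + Λ t₂) - Λ (t₁ + t₂) ∈ K)
    {p q : X × Y} (hpq : prodSucc K Λ p q) :
    conicalGauge H Λ q.2 + dist p.1 q.1 ≤ conicalGauge H Λ p.2 :=
  conicalGauge_add_le hHadd (fun s t hs ht => hKH (hΛsub s t hs ht)) dist_nonneg (hKH hpq)

end Cone

theorem vector_maximal_principle_nonarchimedean_general
    {Y : Type*} [AddCommGroup Y] [Module ℝ Y]
    (K H : Set Y)
    (hKcone : ∀ a b : ℝ, 0 ≤ a → 0 ≤ b → ∀ x ∈ K, ∀ y ∈ K, a • x + b • y ∈ K)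
    (hHcone : ∀ a b : ℝ, 0 ≤ a → 0 ≤ b → ∀ x ∈ H, ∀ y ∈ H, a • x + b • y ∈ H)
    (hKH : K ⊆ H)
    (Λ : ℝ → Y) (hΛmem : ∀ t : ℝ, 0 ≤ t → Λ t ∈ K)
    (hΛ0 : Λ 0 = 0)
    (hΛstrict : ∀ t τ : ℝ, 0 ≤ t → t < τ → Λ τ - Λ t ∈ K \ (-H))
    (hΛsub : ∀ t₁ t₂ : ℝ, 0 ≤ t₁ → 0 ≤ t₂ → (Λ t₁ + Λ t₂) - Λ (t₁ + t₂) ∈ K)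
    {X : Type*} [MetricSpace X]
    (A : Set (X × Y))
    (hPY : ∀ p ∈ A, p.2 ∈ H)
    (hind : ∀ a : ℕ → X × Y,
      (∀ n : ℕ, a n ∈ A ∧ conicalGauge H Λ (a n).2 < ⊤) →
      (∀ n m : ℕ, n ≤ m → prodSucc K Λ (a n) (a m)) →
      (∀ δ : ℝ, 0 < δ → ∃ N : ℕ, ∀ p q : ℕ, N ≤ p → p ≤ q →
        dist (a p).1 (a q).1 ≤ δ) →
      ∃ b ∈ A, ∀ n : ℕ, prodSucc K Λ (a n) b) :
    ∀ p ∈ A, conicalGauge H Λ p.2 < ⊤ →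
      ∃ q ∈ A, conicalGauge H Λ q.2 < ⊤ ∧ prodSucc K Λ p q ∧
        ∀ r ∈ A, prodSucc K Λ q r →
          q.1 = r.1 ∧ conicalGauge H Λ q.2 = conicalGauge H Λ r.2 := by
  intro p hpA hpfin
  have hK0 : (0 : Y) ∈ K := hΛ0 ▸ hΛmem 0 le_rfl
  have hΛmono (t τ : ℝ) (ht : 0 ≤ t) (htτ : t ≤ τ) : Λ τ - Λ t ∈ K :=
    htτ.eq_or_lt.elim (fun h => by simpa [h] using hK0) fun h => (hΛstrict t τ ht h).1
  have : Std.Refl (prodSucc K Λ (X := X)) := ⟨prodSucc_refl hK0 hΛ0⟩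
  have : IsTrans (X × Y) (prodSucc K Λ) :=
    ⟨fun _ _ _ =>
      prodSucc_trans (fun _ hx _ => add_mem_of_smul_add_smul_mem hKcone hx) hΛmono hΛsub⟩
  have hgauge {q r : X × Y} (hqr : prodSucc K Λ q r) :
      conicalGauge H Λ r.2 + dist q.1 r.1 ≤ conicalGauge H Λ q.2 :=
    conicalGauge_add_dist_le_of_prodSucc (fun _ hx _ => add_mem_of_smul_add_smul_mem hHcone hx)
      hKH hΛsub hqr
  set D := {q ∈ A | conicalGauge H Λ q.2 < ⊤}
  have hclosed {q r : X × Y} (hq : q ∈ D) (hr : r ∈ A) (hqr : prodSucc K Λ q r) : r ∈ D :=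
    ⟨hr, ((le_add_of_nonneg_right (mod_cast dist_nonneg)).trans (hgauge hqr)).trans_lt hq.2⟩
  have hcoe {q : X × Y} (hq : q ∈ D) :
      ((conicalGauge H Λ q.2).toReal : EReal) = conicalGauge H Λ q.2 :=
    coe_toReal_conicalGauge hΛ0 (hPY q hq.1) hq.2
  obtain ⟨q, hqD, hpq, hmax⟩ := exists_rel_forall_rel_eq_of_add_le (prodSucc K Λ)
    (φ := fun q => (conicalGauge H Λ q.2).toReal) (e := fun q r => dist q.1 r.1)
    (fun _ _ => dist_nonneg)
    ⟨0, Set.forall_mem_image.2 fun q hq =>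
      EReal.toReal_nonneg (zero_le_conicalGauge hΛ0 (hPY q hq.1))⟩
    (fun q hq r hr hqr => EReal.coe_le_coe_iff.1 <| by
      rw [EReal.coe_add, hcoe hq, hcoe hr]; exact hgauge hqr)
    (fun a haD hchain hcauchy =>
      let ⟨b, hbA, hb⟩ := hind a haD hchain hcauchy
      ⟨b, hclosed (haD 0) hbA (hb 0), hb⟩)
    ⟨hpA, hpfin⟩
  refine ⟨q, hqD.1, hqD.2, hpq, fun r hr hqr => ?_⟩
  obtain ⟨hdist, hφ⟩ := hmax r (hclosed hqD hr hqr) hqr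
  exact ⟨dist_eq_zero.1 hdist, by rw [← hcoe hqD, ← hcoe (hclosed hqD hr hqr), hφ]⟩

/-- Main result, non-Archimedean case (Theorem 5.1). -/
theorem vector_maximal_principle_nonarchimedean
    {Y : Type*} [AddCommGroup Y] [Module ℝ Y]
    (K H : Set Y)
    (hKcone : ∀ a b : ℝ, 0 ≤ a → 0 ≤ b → ∀ x ∈ K, ∀ y ∈ K, a • x + b • y ∈ K)
    (hHcone : ∀ a b : ℝ, 0 ≤ a → 0 ≤ b → ∀ x ∈ H, ∀ y ∈ H, a • x + b • y ∈ H)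
    (hKH : K ⊆ H)
    (Λ : ℝ → Y) (hΛmem : ∀ t : ℝ, 0 ≤ t → Λ t ∈ K)
    (hΛ0 : Λ 0 = 0)
    (hΛstrict : ∀ t τ : ℝ, 0 ≤ t → t < τ → Λ τ - Λ t ∈ K \ (-H))
    (hΛsub : ∀ t₁ t₂ : ℝ, 0 ≤ t₁ → 0 ≤ t₂ → (Λ t₁ + Λ t₂) - Λ (t₁ + t₂) ∈ K)
    {X : Type*} [MetricSpace X]
    (A : Set (X × Y)) (hA : A.Nonempty)
    (hPY : ∀ p ∈ A, p.2 ∈ H)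
    (hdom : ∃ p ∈ A, conicalGauge H Λ p.2 < ⊤)
    (hind : ∀ a : ℕ → X × Y,
      (∀ n : ℕ, a n ∈ A ∧ conicalGauge H Λ (a n).2 < ⊤) →
      (∀ n m : ℕ, n ≤ m → prodSucc K Λ (a n) (a m)) →
      (∀ δ : ℝ, 0 < δ → ∃ N : ℕ, ∀ p q : ℕ, N ≤ p → p ≤ q →
        dist (a p).1 (a q).1 ≤ δ) →
      ∃ b ∈ A, ∀ n : ℕ, prodSucc K Λ (a n) b) :
    ∀ p ∈ A, conicalGauge H Λ p.2 < ⊤ →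
      ∃ q ∈ A, conicalGauge H Λ q.2 < ⊤ ∧ prodSucc K Λ p q ∧
        ∀ r ∈ A, prodSucc K Λ q r →
          q.1 = r.1 ∧ conicalGauge H Λ q.2 = conicalGauge H Λ r.2 :=
  vector_maximal_principle_nonarchimedean_general K H hKcone hHcone hKH Λ hΛmem hΛ0 hΛstrict hΛsub A
    hPY hind
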